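/- arXiv:quant-ph/9804034 — 4 statements merged into one kernel-verified Lean document; each statement's English description precedes it below -/
import Mathlib

section
/- Every permutation of a finite type can be written as the product of two involutions; that is, for every permutation σ of a finite type α there exist permutations τ₁ and τ₂ of α with τ₁ * τ₁ = 1 and τ₂ * τ₂ = 1 such that σ = τ₁ * τ₂. -/
/-!
Every permutation `σ` is conjugate to its inverse by an involution `τ`; then
`σ = τ * (τ * σ)` and `(τ * σ) ^ 2 = (τ * σ * τ) * σ = σ⁻¹ * σ = 1`.
To build `τ`, pick a base point `b` on each cycle of `σ` and reflect the cycle through it: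
`τ ((σ ^ k) b) = (σ ^ (-k)) b`. This is well defined since `(σ ^ i) b = (σ ^ j) b` forces
`(σ ^ (-i)) b = (σ ^ (-j)) b`, and `τ σ τ = σ⁻¹` because `k ↦ -k` conjugates `k ↦ k + 1` to `k ↦ k - 1`.
-/

namespace Equiv.Perm

variable {α : Type*} (σ : Perm α)

theorem zpow_neg_apply_eq_of_zpow_apply_eq {a : α} {i j : ℤ} (h : (σ ^ i) a = (σ ^ j) a) :
    (σ ^ (-i)) a = (σ ^ (-j)) a := by
  have h' := congrArg (σ ^ (-i - j)) h
  rw [← mul_apply, ← mul_apply, ← zpow_add, ← zpow_add] at h'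
  rwa [show -i - j + i = -j by ring, show -i - j + j = -i by ring, eq_comm] at h'

noncomputable def cycleRep (x : α) : α :=
  (Quotient.mk (SameCycle.setoid σ) x).out

theorem sameCycle_cycleRep (x : α) : σ.SameCycle (σ.cycleRep x) x :=
  Quotient.mk_out (s := SameCycle.setoid σ) x

theorem cycleRep_eq_of_sameCycle {x y : α} (h : σ.SameCycle x y) : σ.cycleRep x = σ.cycleRep y :=
  congrArg Quotient.out (Quotient.sound (s := SameCycle.setoid σ) h)

theorem cycleRep_zpow_apply_cycleRep (x : α) (i : ℤ) :
    σ.cycleRep ((σ ^ i) (σ.cycleRep x)) = σ.cycleRep x :=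
  cycleRep_eq_of_sameCycle σ (sameCycle_zpow_left.2 (sameCycle_cycleRep σ x))

noncomputable def reflectCycles (x : α) : α :=
  (σ ^ (-(sameCycle_cycleRep σ x).choose)) (σ.cycleRep x)

theorem reflectCycles_apply_of_zpow_apply_eq {x : α} {k : ℤ} (h : (σ ^ k) (σ.cycleRep x) = x) :
    σ.reflectCycles x = (σ ^ (-k)) (σ.cycleRep x) :=
  zpow_neg_apply_eq_of_zpow_apply_eq σ ((sameCycle_cycleRep σ x).choose_spec.trans h.symm)

theorem reflectCycles_zpow_apply_cycleRep (x : α) (i : ℤ) :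
    σ.reflectCycles ((σ ^ i) (σ.cycleRep x)) = (σ ^ (-i)) (σ.cycleRep x) := by
  have hrep := cycleRep_zpow_apply_cycleRep σ x i
  rw [reflectCycles_apply_of_zpow_apply_eq σ (k := i) (by rw [hrep]), hrep]

theorem reflectCycles_involutive : Function.Involutive σ.reflectCycles := by
  intro x
  obtain ⟨k, hk⟩ := sameCycle_cycleRep σ x
  rw [← hk, reflectCycles_zpow_apply_cycleRep, reflectCycles_zpow_apply_cycleRep, neg_neg]

theorem reflectCycles_apply_apply_reflectCycles (x : α) :
    σ.reflectCycles (σ (σ.reflectCycles x)) = σ⁻¹ x := by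
  obtain ⟨k, hk⟩ := sameCycle_cycleRep σ x
  rw [← hk, reflectCycles_zpow_apply_cycleRep, ← mul_apply, ← zpow_one_add,
    reflectCycles_zpow_apply_cycleRep, ← mul_apply, ← zpow_neg_one, ← zpow_add]
  congr 2
  ring

theorem exists_involution_conj_eq_inv : ∃ τ : Perm α, τ * τ = 1 ∧ τ * σ * τ = σ⁻¹ := by
  refine ⟨(reflectCycles_involutive σ).toPerm, ?_, ?_⟩ <;> ext x
  · exact reflectCycles_involutive σ x
  · exact reflectCycles_apply_apply_reflectCycles σ x

end Equiv.Perm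

theorem perm_eq_prod_two_involutions_general {α : Type*} (σ : Equiv.Perm α) :
    ∃ τ₁ τ₂ : Equiv.Perm α, τ₁ * τ₁ = 1 ∧ τ₂ * τ₂ = 1 ∧ σ = τ₁ * τ₂ := by
  obtain ⟨τ, hτ, hconj⟩ := σ.exists_involution_conj_eq_inv
  refine ⟨τ, τ * σ, hτ, ?_, ?_⟩
  · calc τ * σ * (τ * σ) = τ * σ * τ * σ := by group
      _ = 1 := by rw [hconj, inv_mul_cancel]
  · rw [← mul_assoc, hτ, one_mul]

theorem perm_eq_prod_two_involutions {α : Type*} [Fintype α] (σ : Equiv.Perm α) :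
    ∃ τ₁ τ₂ : Equiv.Perm α, τ₁ * τ₁ = 1 ∧ τ₂ * τ₂ = 1 ∧ σ = τ₁ * τ₂ :=
  perm_eq_prod_two_involutions_general σ
end

section
/- Every cyclic permutation of a finite type is the product of two involutions; that is, if σ is a permutation of a finite type α and σ is a cycle (Equiv.Perm.IsCycle σ), then there exist permutations τ₁ and τ₂ with τ₁ * τ₁ = 1 and τ₂ * τ₂ = 1 such that σ = τ₁ * τ₂. -/
theorem cycle_eq_prod_two_involutions {α : Type*} [Fintype α] (σ : Equiv.Perm α)
    (hσ : σ.IsCycle) :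
    ∃ τ₁ τ₂ : Equiv.Perm α, τ₁ * τ₁ = 1 ∧ τ₂ * τ₂ = 1 ∧ σ = τ₁ * τ₂ := by
  classical
  set n := σ.support.card with hn
  have hord : orderOf σ = n := hσ.orderOf
  have h2 : 2 ≤ n := hσ.two_le_card_support
  haveI : NeZero n := ⟨by omega⟩
  obtain ⟨a, ha, -⟩ := id hσ
  -- f : ZMod n → α parametrizing the support
  set f : ZMod n → α := fun k => (σ ^ k.val) a with hf
  have key : ∀ i : ℕ, (σ ^ i) a = f (i : ZMod n) := by
    intro i
    simp only [hf, ZMod.val_natCast]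
    rw [← hord, pow_mod_orderOf]
  have hmem : ∀ k : ZMod n, f k ∈ σ.support := by
    intro k
    simp only [Equiv.Perm.mem_support, hf]
    intro h
    apply ha
    have : (σ ^ k.val) (σ a) = (σ ^ k.val) a := by
      rw [← Equiv.Perm.mul_apply, ← pow_succ, pow_succ', Equiv.Perm.mul_apply, h]
    exact (Equiv.injective _ this)
  have finj : Function.Injective f := by
    intro k j hkj
    have : σ ^ k.val = σ ^ j.val := by
      rw [hσ.pow_eq_pow_iff]
      exact ⟨a, ha, hkj⟩
    rw [pow_inj_mod, hord, Nat.mod_eq_of_lt (ZMod.val_lt k), Nat.mod_eq_of_lt (ZMod.val_lt j)]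
      at this
    exact ZMod.val_injective n this
  have fsurj : ∀ b ∈ σ.support, ∃ k : ZMod n, f k = b := by
    intro b hb
    obtain ⟨i, hi⟩ := hσ.exists_pow_eq ha (Equiv.Perm.mem_support.mp hb)
    exact ⟨(i : ZMod n), by rw [← key]; exact hi⟩
  -- the equivalence ZMod n ≃ support σ
  have hbij : Function.Bijective (fun k : ZMod n => (⟨f k, hmem k⟩ : {x // x ∈ σ.support})) := by
    constructor
    · intro k j h
      exact finj (Subtype.mk_eq_mk.mp h)
    · rintro ⟨b, hb⟩
      obtain ⟨k, hk⟩ := fsurj b hb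
      exact ⟨k, Subtype.ext hk⟩
  set e : ZMod n ≃ {x // x ∈ σ.support} := Equiv.ofBijective _ hbij with he
  -- two involutions on ZMod n
  have inv1 : Function.Involutive (fun k : ZMod n => 1 - k) := fun k => by ring
  have inv2 : Function.Involutive (fun k : ZMod n => -k) := fun k => by ring
  set t1 : Equiv.Perm (ZMod n) := inv1.toPerm _ with ht1
  set t2 : Equiv.Perm (ZMod n) := inv2.toPerm _ with ht2
  refine ⟨t1.extendDomain e, t2.extendDomain e, ?_, ?_, ?_⟩
  · rw [Equiv.Perm.extendDomain_mul]
    have : t1 * t1 = 1 := by ext k; simp [ht1, Function.Involutive.toPerm]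
    rw [this, Equiv.Perm.extendDomain_one]
  · rw [Equiv.Perm.extendDomain_mul]
    have : t2 * t2 = 1 := by ext k; simp [ht2, Function.Involutive.toPerm]
    rw [this, Equiv.Perm.extendDomain_one]
  · rw [Equiv.Perm.extendDomain_mul]
    ext x
    by_cases hx : x ∈ σ.support
    · obtain ⟨k, hk⟩ := fsurj x hx
      subst hk
      rw [Equiv.Perm.extendDomain_apply_subtype _ e (hmem k)]
      have hesymm : e.symm ⟨f k, hmem k⟩ = k := by
        rw [Equiv.symm_apply_eq]; rfl
      rw [hesymm]
      have happ : (t1 * t2) k = k + 1 := by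
        simp [ht1, ht2, Function.Involutive.toPerm]; ring
      rw [happ]
      show σ (f k) = f (k + 1)
      have : σ (f k) = (σ ^ (k.val + 1)) a := by
        show σ ((σ ^ k.val) a) = _
        rw [← Equiv.Perm.mul_apply, ← pow_succ']
      rw [this, key]
      congr 1
      push_cast
      rw [ZMod.natCast_val, ZMod.cast_id]
    · rw [Equiv.Perm.extendDomain_apply_not_subtype _ e hx]
      exact (Equiv.Perm.notMem_support.mp hx)
end

section
/- There is no ℂ-linear map L from (Fin 2 → ℂ) ⊗[ℂ] (Fin 2 → ℂ) to itself such that L (ψ ⊗ₜ e₀) = ψ ⊗ₜ ψ for every vector ψ : Fin 2 → ℂ, where e₀ is the standard basis vector with e₀ 0 = 1 and e₀ 1 = 0. -/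
open TensorProduct

noncomputable def phi : ((Fin 2 → ℂ) ⊗[ℂ] (Fin 2 → ℂ)) →ₗ[ℂ] ℂ :=
  TensorProduct.lift
    (LinearMap.mk₂ ℂ (fun v w => v 0 * w 1)
      (fun a b w => by simp [add_mul])
      (fun c a w => by simp [mul_assoc])
      (fun v a b => by ring_nf; simp [mul_add])
      (fun c v w => by simp; ring))

theorem no_linear_cloning :
    ¬ ∃ L : ((Fin 2 → ℂ) ⊗[ℂ] (Fin 2 → ℂ)) →ₗ[ℂ] ((Fin 2 → ℂ) ⊗[ℂ] (Fin 2 → ℂ)),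
      ∀ ψ : Fin 2 → ℂ, L (ψ ⊗ₜ[ℂ] (![1, 0] : Fin 2 → ℂ)) = ψ ⊗ₜ[ℂ] ψ := by
  rintro ⟨L, hL⟩
  have h0 := hL ![1, 0]
  have h1 := hL ![0, 1]
  have hs := hL ![1, 1]
  have hsum : (![1, 1] : Fin 2 → ℂ) = ![1, 0] + ![0, 1] := by
    funext i; fin_cases i <;> simp
  rw [hsum, add_tmul, map_add, h0, h1] at hs
  have := congrArg phi hs
  simp only [map_add, phi, TensorProduct.lift.tmul, LinearMap.mk₂_apply] at this
  norm_num [Matrix.cons_val_zero, Matrix.cons_val_one] at this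
end

section
/- Let n : ℕ and let D be a diagonal matrix over ℂ indexed by (Fin n → ZMod 2) that is unitary. Then there exists θ : Finset (Fin n) → ℝ such that for every x : Fin n → ZMod 2, the diagonal entry D x x equals Complex.exp (Complex.I * ∑ over s : Finset (Fin n) of θ s * χ_s(x)), where χ_s(x) = (-1)^(number of i ∈ s with x i = 1). -/
/-!
A unitary diagonal matrix has diagonal entries of modulus one, so `D x x = exp (i ω x)` with
`ω x = arg (D x x)`. The `2 ^ n` sign vectors `μ_s` are orthogonal,
`∑ s, μ_s y * μ_s x = 2 ^ n δ_{xy}`, because the sum over subsets factorises into a product over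
the qubits of `ε(y i) ε(x i) + 1`. Hence `ω = ∑ s, θ s • μ_s` with `θ s = 2⁻ⁿ ∑ y, ω y μ_s y`.
-/

open Finset

section Morse

variable {ι : Type*}

def morseSign (s : Finset ι) (x : ι → ZMod 2) : ℝ :=
  (-1) ^ #(s.filter fun i => x i = 1)

lemma morseSign_eq_prod (s : Finset ι) (x : ι → ZMod 2) :
    morseSign s x = ∏ i ∈ s, if x i = 1 then -1 else 1 := by
  rw [morseSign, prod_ite, prod_const, prod_const_one, mul_one]

lemma zmodTwo_sign_mul_sign_add_one (a b : ZMod 2) :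
    ((if a = 1 then -1 else 1) * (if b = 1 then -1 else 1) + 1 : ℝ) =
      if a = b then 2 else 0 := by
  have zero_or_one (c : ZMod 2) : c = 0 ∨ c = 1 := by revert c; decide
  rcases zero_or_one a with rfl | rfl <;> rcases zero_or_one b with rfl | rfl <;> norm_num

variable [Fintype ι]

lemma sum_morseSign_mul_morseSign (x y : ι → ZMod 2) :
    ∑ s, morseSign s y * morseSign s x = if y = x then 2 ^ Fintype.card ι else 0 := by
  calc ∑ s, morseSign s y * morseSign s x
      = ∏ i, ((if y i = 1 then -1 else 1) * (if x i = 1 then -1 else 1) + 1 : ℝ) := by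
        simp only [prod_add_one, powerset_univ, morseSign_eq_prod, prod_mul_distrib]
    _ = if y = x then 2 ^ Fintype.card ι else 0 := by
        simp only [zmodTwo_sign_mul_sign_add_one]
        split_ifs with hyx
        · simp [hyx]
        · obtain ⟨i, hi⟩ := Function.ne_iff.mp hyx
          exact prod_eq_zero (mem_univ i) (if_neg hi)

variable [DecidableEq ι]

noncomputable def morseCoeff (ω : (ι → ZMod 2) → ℝ) (s : Finset ι) : ℝ :=
  (∑ y, ω y * morseSign s y) / 2 ^ Fintype.card ι

lemma sum_morseCoeff_mul_morseSign (ω : (ι → ZMod 2) → ℝ) (x : ι → ZMod 2) :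
    ∑ s, morseCoeff ω s * morseSign s x = ω x := by
  calc ∑ s, morseCoeff ω s * morseSign s x
      = (∑ y, ω y * ∑ s, morseSign s y * morseSign s x) / 2 ^ Fintype.card ι := by
        simp only [morseCoeff, div_mul_eq_mul_div, ← sum_div, sum_mul, mul_sum, mul_assoc]
        rw [sum_comm]
    _ = ω x := by simp [sum_morseSign_mul_morseSign]

end Morse

lemma Matrix.IsDiag.norm_apply_self_eq_one_of_mem_unitaryGroup {m 𝕜 : Type*} [Fintype m]
    [DecidableEq m] [RCLike 𝕜] {D : Matrix m m 𝕜} (hdiag : D.IsDiag)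
    (hunit : D ∈ Matrix.unitaryGroup m 𝕜) (i : m) : ‖D i i‖ = 1 := by
  have h : (star D * D) i i = 1 := by
    rw [Matrix.mem_unitaryGroup_iff'.mp hunit, Matrix.one_apply_eq]
  rw [Matrix.mul_apply, sum_eq_single i (fun j _ hj => by rw [hdiag hj, mul_zero]) (by simp),
    Matrix.star_apply, RCLike.star_def, RCLike.conj_mul] at h
  exact (pow_eq_one_iff_of_nonneg (norm_nonneg _) two_ne_zero).mp (by exact_mod_cast h)

theorem diagonal_unitary_as_morse_phases (n : ℕ)
    (D : Matrix (Fin n → ZMod 2) (Fin n → ZMod 2) ℂ)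
    (hdiag : D.IsDiag) (hunit : D ∈ Matrix.unitaryGroup (Fin n → ZMod 2) ℂ) :
    ∃ θ : Finset (Fin n) → ℝ, ∀ x : Fin n → ZMod 2,
      D x x = Complex.exp (Complex.I *
        ((∑ s : Finset (Fin n),
          θ s * (-1 : ℝ) ^ (s.filter (fun i => x i = 1)).card : ℝ) : ℂ)) := by
  set ω : (Fin n → ZMod 2) → ℝ := fun x => (D x x).arg
  have hphase : ∀ x, D x x = Complex.exp (Complex.I * ω x) := fun x => by
    rw [mul_comm, ← Complex.norm_mul_exp_arg_mul_I (D x x),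
      hdiag.norm_apply_self_eq_one_of_mem_unitaryGroup hunit, Complex.ofReal_one, one_mul]
  refine ⟨morseCoeff ω, fun x => ?_⟩
  rw [hphase x, ← sum_morseCoeff_mul_morseSign ω x]
  rfl
end
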